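/- Let n ≥ 1 be an integer and let m_1, …, m_n be nonnegative integers with Σ_{j=1}^n j·m_j = n. Set k = Σ_{j=1}^n m_j and s = 2k - m_1. Then (k!)^2/(m_1!·n!) · Π_{j=2}^n (j!/2)^{m_j} ≤ (s/n)^{(s-2)/2} · Π_{j=2}^n (j/n)^{(j-2)m_j/2}. -/

import Mathlib

/-!
Write `w(x) = (x/n)^((x-2)/2) / x!`. Then `w(n) = 1/n!` and the right-hand side is
`w(s) s! ∏ (w(j) j!)^(m_j)`, so the claim splits into two inequalities:
`k!² ≤ m₁! s!`, which holds because `m₁ + s = 2k` (it is `C(2k, m₁) ≤ C(2k, k)`), and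
`w(n) ≤ w(s) ∏ (2 w(j))^(m_j)`. For the latter note `n = m₁ + ∑ j m_j` and `s = m₁ + ∑ 2 m_j`:
trading a part `j` for a part `2` costs at most the factor `2 w(j) = w(j) / w(2)`, because `w` is
log-concave on `x ≥ 2`, so that `w(x + q) / w(x) ≤ w(2 + q) / w(2)`.
-/

open Finset
open scoped Nat

theorem factorial_sq_le_factorial_mul_factorial {a b k : ℕ} (h : a + b = 2 * k) :
    k ! ^ 2 ≤ a ! * b ! := by
  have hmid := Nat.choose_le_middle a (a + b)
  rw [h, Nat.mul_div_cancel_left k two_pos] at hmid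
  have hk := Nat.choose_mul_factorial_mul_factorial (show k ≤ 2 * k by omega)
  have ha := Nat.choose_mul_factorial_mul_factorial (show a ≤ 2 * k by omega)
  rw [show 2 * k - k = k by omega] at hk
  rw [show 2 * k - a = b by omega] at ha
  refine Nat.le_of_mul_le_mul_left ?_ (Nat.choose_pos (show k ≤ 2 * k by omega))
  calc (2 * k).choose k * k ! ^ 2 = (2 * k).choose a * (a ! * b !) := by
        rw [sq, ← mul_assoc, ← mul_assoc, hk, ha]
    _ ≤ (2 * k).choose k * (a ! * b !) := Nat.mul_le_mul_right _ hmid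

section LogConcave

variable {f : ℕ → ℝ}

theorem antitone_succ_div_of_logConcave (hpos : ∀ i, 0 < f i)
    (hlc : ∀ i, f i * f (i + 2) ≤ f (i + 1) ^ 2) : Antitone fun i ↦ f (i + 1) / f i :=
  antitone_nat_of_succ_le fun i ↦ by
    rw [div_le_div_iff₀ (hpos _) (hpos _)]
    nlinarith [hlc i]

theorem add_div_le_add_div_of_logConcave (hpos : ∀ i, 0 < f i)
    (hlc : ∀ i, f i * f (i + 2) ≤ f (i + 1) ^ 2) {a b : ℕ} (hab : a ≤ b) (q : ℕ) :
    f (b + q) / f b ≤ f (a + q) / f a := by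
  induction q with
  | zero => rw [add_zero, add_zero, div_self (hpos b).ne', div_self (hpos a).ne']
  | succ q ih =>
    have hratio := antitone_succ_div_of_logConcave hpos hlc (show a + q ≤ b + q by omega)
    calc f (b + (q + 1)) / f b = f (b + q + 1) / f (b + q) * (f (b + q) / f b) := by
          rw [div_mul_div_cancel₀ (hpos _).ne', add_assoc]
      _ ≤ f (a + q + 1) / f (a + q) * (f (a + q) / f a) :=
          mul_le_mul hratio ih (div_nonneg (hpos _).le (hpos _).le)
            (div_nonneg (hpos _).le (hpos _).le)
      _ = f (a + (q + 1)) / f a := by rw [div_mul_div_cancel₀ (hpos _).ne', add_assoc]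

end LogConcave

-- `x (x + 2) ≤ (x + 1) ^ 2`, raised to the power `(x - 2) / 2 ≥ 0`
theorem rpow_mul_rpow_le_sq_rpow {c x : ℝ} (hc : 0 < c) (hx : 2 ≤ x) :
    (x / c) ^ ((x - 2) / 2) * ((x + 2) / c) ^ ((x - 2) / 2) ≤
      (((x + 1) / c) ^ ((x - 2) / 2)) ^ 2 := by
  have hv : 0 ≤ (x + 1) / c := by positivity
  rw [← Real.mul_rpow (by positivity) (by positivity), ← Real.rpow_mul_natCast hv,
    mul_comm _ ((2 : ℕ) : ℝ), Real.rpow_natCast_mul hv]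
  refine Real.rpow_le_rpow (by positivity) ?_ (by linarith)
  rw [div_pow, div_mul_div_comm, ← sq]
  gcongr
  nlinarith

noncomputable def faaWeight (c : ℝ) (x : ℕ) : ℝ := ((x : ℝ) / c) ^ (((x : ℝ) - 2) / 2) / x !

section FaaWeight

variable {c : ℝ}

theorem faaWeight_pos (hc : 0 < c) {x : ℕ} (hx : x ≠ 0) : 0 < faaWeight c x := by
  have : (0 : ℝ) < x := by positivity
  unfold faaWeight
  positivity

theorem faaWeight_nonneg (hc : 0 ≤ c) (x : ℕ) : 0 ≤ faaWeight c x := by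
  unfold faaWeight
  positivity

theorem faaWeight_mul_factorial (c : ℝ) (x : ℕ) :
    faaWeight c x * x ! = ((x : ℝ) / c) ^ (((x : ℝ) - 2) / 2) :=
  div_mul_cancel₀ _ (by positivity)

theorem faaWeight_mul_faaWeight_add_two_le (hc : 0 < c) {x : ℕ} (hx : 2 ≤ x) :
    faaWeight c x * faaWeight c (x + 2) ≤ faaWeight c (x + 1) ^ 2 := by
  have hX : (2 : ℝ) ≤ x := by exact_mod_cast hx
  have hv : 0 ≤ ((x : ℝ) + 1) / c := by positivity
  have hw : 0 ≤ ((x : ℝ) + 2) / c := by positivity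
  have hH1 : faaWeight c (x + 1) =
      (((x : ℝ) + 1) / c) ^ (((x : ℝ) - 2) / 2) * (((x : ℝ) + 1) / c) ^ (1 / 2 : ℝ) /
        (((x : ℝ) + 1) * x !) := by
    rw [faaWeight, ← Real.rpow_add' hv (by positivity)]
    push_cast [Nat.factorial_succ]
    ring_nf
  have hH2 : faaWeight c (x + 2) =
      (((x : ℝ) + 2) / c) ^ (((x : ℝ) - 2) / 2) * (((x : ℝ) + 2) / c) /
        (((x : ℝ) + 2) * ((x : ℝ) + 1) * x !) := by
    rw [faaWeight, ← Real.rpow_add_one' hw (by positivity)]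
    push_cast [Nat.factorial_succ]
    ring_nf
  have hsqrt : ((((x : ℝ) + 1) / c) ^ (1 / 2 : ℝ)) ^ 2 = ((x : ℝ) + 1) / c := by
    rw [← Real.rpow_natCast, ← Real.rpow_mul hv]; norm_num
  have hconc := rpow_mul_rpow_le_sq_rpow hc hX
  rw [hH1, hH2, faaWeight]
  generalize ((x : ℝ) / c) ^ (((x : ℝ) - 2) / 2) = A at hconc ⊢
  generalize (((x : ℝ) + 2) / c) ^ (((x : ℝ) - 2) / 2) = W at hconc ⊢
  generalize (((x : ℝ) + 1) / c) ^ (((x : ℝ) - 2) / 2) = V at hconc ⊢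
  have hfac : (0 : ℝ) < x ! := by positivity
  calc A / x ! * (W * (((x : ℝ) + 2) / c) / (((x : ℝ) + 2) * ((x : ℝ) + 1) * x !))
      = A * W / (c * ((x : ℝ) + 1) * x ! ^ 2) := by field_simp
    _ ≤ V ^ 2 / (c * ((x : ℝ) + 1) * x ! ^ 2) := by gcongr
    _ = (V * (((x : ℝ) + 1) / c) ^ (1 / 2 : ℝ) / (((x : ℝ) + 1) * x !)) ^ 2 := by
      rw [div_pow, mul_pow, hsqrt]; field_simp

theorem faaWeight_add_le (hc : 0 < c) {x : ℕ} (hx : 2 ≤ x) (q : ℕ) :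
    faaWeight c (x + q) ≤ 2 * faaWeight c (q + 2) * faaWeight c x := by
  obtain ⟨b, rfl⟩ := Nat.exists_eq_add_of_le' hx
  have hratio := add_div_le_add_div_of_logConcave (f := fun i ↦ faaWeight c (i + 2))
    (fun i ↦ faaWeight_pos hc (by omega))
    (fun i ↦ faaWeight_mul_faaWeight_add_two_le hc (by omega)) (Nat.zero_le b) q
  have htwo : faaWeight c 2 = 1 / 2 := by norm_num [faaWeight]
  simp only [zero_add, htwo] at hratio
  rw [div_le_iff₀ (faaWeight_pos hc (by omega))] at hratio
  calc faaWeight c (b + 2 + q) = faaWeight c (b + q + 2) := by rw [add_right_comm]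
    _ ≤ 2 * faaWeight c (q + 2) * faaWeight c (b + 2) := by linarith

theorem faaWeight_add_mul_le (hc : 0 < c) (q r a : ℕ) :
    faaWeight c (a + (q + 2) * r) ≤ faaWeight c (a + 2 * r) * (2 * faaWeight c (q + 2)) ^ r := by
  induction r generalizing a with
  | zero => simp
  | succ r ih =>
    calc faaWeight c (a + (q + 2) * (r + 1)) = faaWeight c (a + 2 + (q + 2) * r + q) := by
          ring_nf
      _ ≤ 2 * faaWeight c (q + 2) * faaWeight c (a + 2 + (q + 2) * r) :=
          faaWeight_add_le hc (by omega) q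
      _ ≤ 2 * faaWeight c (q + 2) *
            (faaWeight c (a + 2 + 2 * r) * (2 * faaWeight c (q + 2)) ^ r) := by
          gcongr
          · positivity [faaWeight_nonneg hc.le (q + 2)]
          · exact ih (a + 2)
      _ = faaWeight c (a + 2 * (r + 1)) * (2 * faaWeight c (q + 2)) ^ (r + 1) := by
          ring_nf

theorem faaWeight_add_sum_le (hc : 0 < c) (m : ℕ → ℕ) {S : Finset ℕ} (hS : ∀ j ∈ S, 2 ≤ j)
    (a : ℕ) :
    faaWeight c (a + ∑ j ∈ S, j * m j) ≤
      faaWeight c (a + 2 * ∑ j ∈ S, m j) * ∏ j ∈ S, (2 * faaWeight c j) ^ m j := by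
  induction S using Finset.induction_on generalizing a with
  | empty => simp
  | insert j S hjS ih =>
    obtain ⟨q, rfl⟩ := Nat.exists_eq_add_of_le' (hS j (mem_insert_self j S))
    have hS' : ∀ i ∈ S, 2 ≤ i := fun i hi ↦ hS i (mem_insert_of_mem hi)
    rw [sum_insert hjS, sum_insert hjS, prod_insert hjS]
    calc faaWeight c (a + ((q + 2) * m (q + 2) + ∑ i ∈ S, i * m i))
        = faaWeight c (a + (q + 2) * m (q + 2) + ∑ i ∈ S, i * m i) := by rw [add_assoc]
      _ ≤ faaWeight c (a + (q + 2) * m (q + 2) + 2 * ∑ i ∈ S, m i) *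
            ∏ i ∈ S, (2 * faaWeight c i) ^ m i := ih hS' _
      _ = faaWeight c (a + 2 * ∑ i ∈ S, m i + (q + 2) * m (q + 2)) *
            ∏ i ∈ S, (2 * faaWeight c i) ^ m i := by rw [add_right_comm]
      _ ≤ faaWeight c (a + 2 * ∑ i ∈ S, m i + 2 * m (q + 2)) *
            (2 * faaWeight c (q + 2)) ^ m (q + 2) * ∏ i ∈ S, (2 * faaWeight c i) ^ m i := by
          gcongr
          · exact prod_nonneg fun i _ ↦ by positivity [faaWeight_nonneg hc.le i]
          · exact faaWeight_add_mul_le hc q _ _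
      _ = faaWeight c (a + 2 * (m (q + 2) + ∑ i ∈ S, m i)) *
            ((2 * faaWeight c (q + 2)) ^ m (q + 2) * ∏ i ∈ S, (2 * faaWeight c i) ^ m i) := by
          ring_nf

end FaaWeight

theorem faa_di_bruno_coeff_bound (n : ℕ) (hn : 1 ≤ n) (m : ℕ → ℕ)
    (hsum : ∑ j ∈ Finset.Icc 1 n, j * m j = n)
    (k s : ℕ) (hk : k = ∑ j ∈ Finset.Icc 1 n, m j) (hs : s = 2 * k - m 1) :
    ((Nat.factorial k : ℝ)) ^ 2 / ((Nat.factorial (m 1) : ℝ) * (Nat.factorial n : ℝ)) *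
      ∏ j ∈ Finset.Icc 2 n, ((Nat.factorial j : ℝ) / 2) ^ (m j) ≤
    ((s : ℝ) / (n : ℝ)) ^ (((s : ℝ) - 2) / 2) *
      ∏ j ∈ Finset.Icc 2 n, ((j : ℝ) / (n : ℝ)) ^ ((((j : ℝ) - 2) * (m j : ℝ)) / 2) := by
  have hsplit (f : ℕ → ℕ) : ∑ j ∈ Icc 1 n, f j = f 1 + ∑ j ∈ Icc 2 n, f j := by
    rw [← insert_Icc_add_one_left_eq_Icc hn, sum_insert (by simp)]; rfl
  rw [hsplit, one_mul] at hsum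
  rw [hsplit] at hk
  have hc : (0 : ℝ) < n := by exact_mod_cast hn
  have hfac : (k ! : ℝ) ^ 2 / (m 1)! ≤ s ! := by
    rw [div_le_iff₀ (by positivity), mul_comm]
    exact_mod_cast factorial_sq_le_factorial_mul_factorial (show m 1 + s = 2 * k by omega)
  have hweight : faaWeight n n ≤ faaWeight n s * ∏ j ∈ Icc 2 n, (2 * faaWeight n j) ^ m j := by
    have h := faaWeight_add_sum_le hc m (S := Icc 2 n) (fun j hj ↦ (mem_Icc.1 hj).1) (m 1)
    rwa [hsum, show m 1 + 2 * ∑ j ∈ Icc 2 n, m j = s by omega] at h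
  have hweight_n : faaWeight n n = 1 / n ! := by
    rw [faaWeight, div_self hc.ne', Real.one_rpow]
  have hprod : ∏ j ∈ Icc 2 n, ((j : ℝ) / n) ^ ((((j : ℝ) - 2) * (m j : ℝ)) / 2) =
      ∏ j ∈ Icc 2 n, (2 * faaWeight n j) ^ m j * ((j ! : ℝ) / 2) ^ m j := by
    refine prod_congr rfl fun j _ ↦ ?_
    rw [← mul_pow, mul_div_right_comm, Real.rpow_mul_natCast (by positivity),
      ← faaWeight_mul_factorial]
    ring
  rw [← faaWeight_mul_factorial, hprod, prod_mul_distrib]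
  calc (k ! : ℝ) ^ 2 / ((m 1)! * n !) * ∏ j ∈ Icc 2 n, ((j ! : ℝ) / 2) ^ m j
      = (k ! : ℝ) ^ 2 / (m 1)! * faaWeight n n * ∏ j ∈ Icc 2 n, ((j ! : ℝ) / 2) ^ m j := by
        rw [hweight_n]; ring
    _ ≤ s ! * (faaWeight n s * ∏ j ∈ Icc 2 n, (2 * faaWeight n j) ^ m j) *
          ∏ j ∈ Icc 2 n, ((j ! : ℝ) / 2) ^ m j := by
        gcongr
        exact faaWeight_nonneg hc.le n
    _ = faaWeight n s * s ! * ((∏ j ∈ Icc 2 n, (2 * faaWeight n j) ^ m j) *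
          ∏ j ∈ Icc 2 n, ((j ! : ℝ) / 2) ^ m j) := by ring
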